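/- There is an M_0 > 0 such that for every real M ≥ M_0 the following holds. Let {X_i}_{i≥1} be i.i.d. positive-integer-valued random variables, W_n = X_1 + ... + X_n, and let {Y_i}_{i≥1} be an independent copy of {X_i}. For a finite vector v of positive integers let S(v) be the sum of its coordinates, l(v) its length, and v' the vector obtained by deleting its last coordinate. Fix a positive integer n and a nonnegative integer b ≤ n/M, let T_{n-b} = max{i : W_i ≤ n-b}, L_n = {max(X_1,...,X_n) ≤ n/M}, and let K be any set of pairs (v_1, v_2) of finite vectors of positive integers satisfying n/3 ≤ S(v_1) ≤ 4n/9, S(v_1') < n/3, n/3 ≤ S(v_2) ≤ 4n/9, and S(v_2') < n/3. Then P( ⋃_{(v_1,v_2)∈K} { (X_1,...,X_{l(v_1)}) = v_1 and (X_{T_{n-b} - l(v_2) + 1},...,X_{T_{n-b}}) = v_2 } ∩ L_n ) ≤ Σ_{(v_1,v_2)∈K} P( (X_1,...,X_{l(v_1)}) = v_1 ) · P( (Y_1,...,Y_{l(v_2)}) = v_2 ). -/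

import Mathlib

/-
On `Lₙ` the gap crossing level `n - b` is at most `n / M`, so for `M ≥ 18`
`W_T ≥ n - b - n / M ≥ 8n / 9 ≥ S(v₁) + S(v₂)`. Hence the block `v₂` ending at `T` starts at some
`r ≥ l(v₁)` and does not overlap the prefix `v₁`. For fixed `r` the event is the intersection of
`{prefix v₁, W_r + S(v₂) ≤ n - b < W_r + S(v₂) + X_{r+l(v₂)+1}}` with
`{X_[r+1, r+l(v₂)] = v₂}`; these are independent, the second has the probability of
`{Y_[1, l(v₂)] = v₂}`, and in the first `X_{r+l(v₂)+1}` may be replaced by `X_{r+1}`. After this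
replacement the events are disjoint in `r` (each says that `r` is the crossing index of level
`n - b - S(v₂)`), so their probabilities sum to at most `P(X_[1, l(v₁)] = v₁)`.
-/

open MeasureTheory ProbabilityTheory Finset Function

def partialSum (g : ℕ → ℕ) (m : ℕ) : ℕ := ∑ i ∈ Icc 1 m, g i

def MatchesAt (g : ℕ → ℕ) (r : ℕ) (v : List ℕ) : Prop :=
  ∀ j : Fin v.length, g (r + 1 + j) = v.get j

section Paths

variable {g g' : ℕ → ℕ}

@[simp]
lemma partialSum_zero (g : ℕ → ℕ) : partialSum g 0 = 0 := rfl

lemma partialSum_succ (g : ℕ → ℕ) (m : ℕ) : partialSum g (m + 1) = partialSum g m + g (m + 1) :=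
  sum_Icc_succ_top (by omega) g

lemma partialSum_congr {r : ℕ} (h : ∀ i ≤ r, g i = g' i) : partialSum g r = partialSum g' r :=
  sum_congr rfl fun i hi => h i (mem_Icc.1 hi).2

lemma partialSum_mono (g : ℕ → ℕ) : Monotone (partialSum g) := fun _ _ h =>
  sum_le_sum_of_subset (Icc_subset_Icc_right h)

lemma partialSum_strictMono (hg : ∀ i, 0 < g i) : StrictMono (partialSum g) :=
  strictMono_nat_of_lt_succ fun m => by rw [partialSum_succ]; exact Nat.lt_add_of_pos_right (hg _)

lemma matchesAt_cons {r a : ℕ} {v : List ℕ} :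
    MatchesAt g r (a :: v) ↔ g (r + 1) = a ∧ MatchesAt g (r + 1) v := by
  simp only [MatchesAt, List.length_cons, Fin.forall_fin_succ, Fin.val_zero, add_zero,
    List.get_cons_zero, Fin.val_succ]
  refine and_congr_right fun _ => forall_congr' fun j => ?_
  rw [show r + 1 + (j + 1) = r + 1 + 1 + j by omega]
  rfl

lemma dependsOn_matchesAt (r : ℕ) (v : List ℕ) :
    DependsOn (MatchesAt · r v) (Ioc r (r + v.length) : Set ℕ) := fun g g' h => by
  refine propext (forall_congr' fun j => ?_)
  rw [h _ (by simp; omega)]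

lemma partialSum_add_length {r : ℕ} {v : List ℕ} (h : MatchesAt g r v) :
    partialSum g (r + v.length) = partialSum g r + v.sum := by
  induction v generalizing r with
  | nil => simp
  | cons a v ih =>
    obtain ⟨ha, hv⟩ := matchesAt_cons.1 h
    rw [List.length_cons, ← add_assoc, add_right_comm, ih hv, partialSum_succ, ha, List.sum_cons,
      add_assoc]

lemma sub_le_partialSum_of_lt_partialSum_succ (hg : ∀ i, 0 < g i) {n c t : ℕ} {ε : ℝ}
    (hε : 0 ≤ ε) (hcn : c ≤ n) (hL : ∀ i ∈ Icc 1 n, (g i : ℝ) ≤ ε)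
    (ht : c < partialSum g (t + 1)) : (c : ℝ) - ε ≤ partialSum g t := by
  rcases le_or_gt (t + 1) n with htn | htn
  · have hgt := hL (t + 1) (mem_Icc.2 ⟨by omega, htn⟩)
    rw [partialSum_succ] at ht
    have : (c : ℝ) < partialSum g t + g (t + 1) := by exact_mod_cast ht
    linarith
  · have hle : t ≤ partialSum g t := (partialSum_strictMono hg).le_apply
    have : (c : ℝ) ≤ partialSum g t := by exact_mod_cast (by omega : c ≤ partialSum g t)
    linarith

lemma length_add_length_le_of_matchesAt (hg : ∀ i, 0 < g i) {t : ℕ} {v₁ v₂ : List ℕ}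
    (h₁ : MatchesAt g 0 v₁) (h₂ : MatchesAt g (t - v₂.length) v₂)
    (hsum : v₁.sum + v₂.sum ≤ partialSum g t) : v₁.length + v₂.length ≤ t := by
  have hmono := partialSum_strictMono hg
  have hl₂ : v₂.length ≤ t := by
    by_contra! hlt
    rw [Nat.sub_eq_zero_of_le hlt.le] at h₂
    have := partialSum_add_length h₂
    have := hmono hlt
    simp_all only [zero_add, partialSum_zero]
    omega
  have hW₂ := partialSum_add_length h₂
  have hW₁ := partialSum_add_length h₁
  rw [Nat.sub_add_cancel hl₂] at hW₂
  rw [zero_add, partialSum_zero, zero_add] at hW₁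
  have : v₁.length ≤ t - v₂.length := hmono.le_iff_le.1 (by omega)
  omega

end Paths

section DependsOn

variable {ι β : Type*}

lemma DependsOn.setOf_eq_preimage_restrict {p : (ι → β) → Prop} {S : Finset ι}
    (hp : DependsOn p S) : {g | p g} = S.restrict ⁻¹' (S.restrict '' {g | p g}) := by
  refine (Set.subset_preimage_image _ _).antisymm ?_
  rintro g ⟨g', hg', hgg'⟩
  show p g
  exact (hp fun i hi => congrFun hgg' ⟨i, hi⟩ : p g' = p g) ▸ hg'

lemma DependsOn.measurableSet_setOf [MeasurableSpace β] [Countable β]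
    [MeasurableSingletonClass β] {p : (ι → β) → Prop} {S : Finset ι} (hp : DependsOn p S) :
    MeasurableSet {g | p g} := by
  rw [hp.setOf_eq_preimage_restrict]
  exact S.measurable_restrict (Set.to_countable _).measurableSet

end DependsOn

namespace ProbabilityTheory

variable {Ω ι β : Type*} [MeasurableSpace Ω] {μ : Measure Ω} [MeasurableSpace β]
  {f : ι → Ω → β}

lemma iIndepFun.measure_comp_mem_eq {κ : Type*} [Countable κ] (h : iIndepFun f μ)
    (hident : ∀ i j, IdentDistrib (f i) (f j) μ μ) {σ τ : κ → ι} (hσ : Injective σ)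
    (hτ : Injective τ) {s : Set (κ → β)} (hs : MeasurableSet s) :
    μ {ω | (fun k => f (σ k) ω) ∈ s} = μ {ω | (fun k => f (τ k) ω) ∈ s} :=
  (IdentDistrib.pi (fun k => hident (σ k) (τ k)) (h.precomp hσ) (h.precomp hτ)).measure_mem_eq hs

variable [Countable β] [MeasurableSingletonClass β]

lemma iIndepFun.measure_and_eq_mul_of_dependsOn (hf : ∀ i, Measurable (f i))
    (h : iIndepFun f μ) {S T : Finset ι} (hST : Disjoint S T) {p q : (ι → β) → Prop}
    (hp : DependsOn p S) (hq : DependsOn q T) :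
    μ {ω | p (f · ω) ∧ q (f · ω)} = μ {ω | p (f · ω)} * μ {ω | q (f · ω)} := by
  have hpS : {ω | p (f · ω)} = (fun ω (i : S) => f i ω) ⁻¹' (S.restrict '' {g | p g}) :=
    congrArg (fun s => (fun ω i => f i ω) ⁻¹' s) hp.setOf_eq_preimage_restrict
  have hqT : {ω | q (f · ω)} = (fun ω (i : T) => f i ω) ⁻¹' (T.restrict '' {g | q g}) :=
    congrArg (fun s => (fun ω i => f i ω) ⁻¹' s) hq.setOf_eq_preimage_restrict
  rw [Set.ofPred_and, hpS, hqT]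
  exact (h.indepFun_finset S T hST hf).measure_inter_preimage_eq_mul _ _
    (Set.to_countable _).measurableSet (Set.to_countable _).measurableSet

/-- The transposition of `a` and `b` fixes `S` and preserves the law of `(f i)ᵢ`. -/
lemma iIndepFun.measure_apply_eq_of_dependsOn [Countable ι] [DecidableEq ι] (h : iIndepFun f μ)
    (hident : ∀ i j, IdentDistrib (f i) (f j) μ μ) {S : Finset ι} {p : (ι → β) → β → Prop}
    (hp : ∀ x, DependsOn (p · x) S) {a b : ι} (ha : a ∉ S) (hb : b ∉ S) :
    μ {ω | p (f · ω) (f a ω)} = μ {ω | p (f · ω) (f b ω)} := by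
  have hswap : ∀ i ∈ S, Equiv.swap a b i = i := fun i hi =>
    Equiv.swap_apply_of_ne_of_ne (ne_of_mem_of_not_mem hi ha) (ne_of_mem_of_not_mem hi hb)
  have hs : DependsOn (fun g => p g (g b)) (insert b S : Finset ι) := fun g g' hgg' => by
    show p g (g b) = p g' (g' b)
    rw [hgg' b (by simp)]
    exact hp _ fun i hi => hgg' i (by simp [hi])
  calc μ {ω | p (f · ω) (f a ω)}
      = μ {ω | (fun k => f (Equiv.swap a b k) ω) ∈ {g | p g (g b)}} := by
        congr 1; ext ω
        show _ ↔ p _ (f (Equiv.swap a b b) ω)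
        rw [Equiv.swap_apply_right]
        exact Iff.of_eq (hp _ fun i hi => by simp [hswap i hi])
    _ = μ {ω | p (f · ω) (f b ω)} :=
        h.measure_comp_mem_eq hident (Equiv.swap a b).injective injective_id hs.measurableSet_setOf

end ProbabilityTheory

section Gaps

variable {Ω : Type*} [MeasurableSpace Ω] {μ : Measure Ω} {X Y : ℕ → Ω → ℕ}

lemma measure_matchesAt_eq (hindep : iIndepFun (Sum.elim X Y) μ)
    (hident : ∀ i j, IdentDistrib (Sum.elim X Y i) (Sum.elim X Y j) μ μ) (r : ℕ) (v : List ℕ) :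
    μ {ω | MatchesAt (X · ω) r v} = μ {ω | MatchesAt (Y · ω) 0 v} := by
  have hshift : ∀ ω, MatchesAt (X · ω) r v ↔ MatchesAt (fun k => X (r + k) ω) 0 v := fun ω => by
    simp only [MatchesAt, zero_add, add_assoc]
  simp_rw [hshift]
  exact hindep.measure_comp_mem_eq hident (σ := fun k => .inl (r + k)) (τ := .inr)
    (Sum.inl_injective.comp (add_right_injective r)) Sum.inr_injective
    (dependsOn_matchesAt 0 v).measurableSet_setOf

lemma measure_crossing_and_matchesAt_eq (hX : ∀ i, Measurable (X i)) (hindep : iIndepFun X μ)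
    (hident : ∀ i j, IdentDistrib (X i) (X j) μ μ) {r : ℕ} {v₁ v₂ : List ℕ}
    (hr : v₁.length ≤ r) (d c : ℕ) :
    μ {ω | (MatchesAt (X · ω) 0 v₁ ∧ partialSum (X · ω) r + d ≤ c ∧
        c < partialSum (X · ω) r + d + X (r + v₂.length + 1) ω) ∧ MatchesAt (X · ω) r v₂} =
      μ {ω | MatchesAt (X · ω) 0 v₁ ∧ partialSum (X · ω) r + d ≤ c ∧
        c < partialSum (X · ω) r + d + X (r + 1) ω} * μ {ω | MatchesAt (X · ω) r v₂} := by
  let p : (ℕ → ℕ) → ℕ → Prop := fun g x =>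
    MatchesAt g 0 v₁ ∧ partialSum g r + d ≤ c ∧ c < partialSum g r + d + x
  have hp : ∀ x, DependsOn (p · x) (Iic r : Finset ℕ) := fun x g g' h => by
    have hA : MatchesAt g 0 v₁ = MatchesAt g' 0 v₁ :=
      dependsOn_matchesAt 0 v₁ fun i hi => h i (by simp at hi ⊢; omega)
    have hW : partialSum g r = partialSum g' r := partialSum_congr fun i hi => h i (by simpa)
    show p g x = p g' x
    simp only [p, hA, hW]
  have hp' : DependsOn (fun g => p g (g (r + v₂.length + 1)))
      (insert (r + v₂.length + 1) (Iic r) : Finset ℕ) := fun g g' h => by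
    show p g _ = p g' _
    rw [h _ (by simp)]
    exact hp _ fun i hi => h i (by simp_all)
  have hdisj : Disjoint (insert (r + v₂.length + 1) (Iic r)) (Ioc r (r + v₂.length)) := by
    rw [disjoint_left]
    intro i hi hi'
    simp only [mem_insert, mem_Iic, mem_Ioc] at hi hi'
    omega
  calc _ = μ {ω | p (X · ω) (X (r + v₂.length + 1) ω)} * μ {ω | MatchesAt (X · ω) r v₂} :=
        hindep.measure_and_eq_mul_of_dependsOn hX hdisj hp' (dependsOn_matchesAt r v₂)
    _ = _ := by
        rw [hindep.measure_apply_eq_of_dependsOn hident hp (a := r + v₂.length + 1) (b := r + 1)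
          (by simp) (by simp)]

lemma tsum_measure_and_crossing_le (hX : ∀ i, Measurable (X i)) {P : Ω → Prop}
    (hP : MeasurableSet {ω | P ω}) (d c : ℕ) :
    ∑' r, μ {ω | P ω ∧ partialSum (X · ω) r + d ≤ c ∧ c < partialSum (X · ω) r + d + X (r + 1) ω}
      ≤ μ {ω | P ω} := by
  have hmeas : ∀ r, MeasurableSet
      {ω | partialSum (X · ω) r + d ≤ c ∧ c < partialSum (X · ω) r + d + X (r + 1) ω} := by
    intro r
    have hdep : DependsOn (fun g => partialSum g r + d ≤ c ∧ c < partialSum g r + d + g (r + 1))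
        (Iic (r + 1) : Finset ℕ) := fun g g' h => by
      show (_ ∧ _) = (_ ∧ _)
      rw [partialSum_congr fun i hi => h i (by simp; omega), h (r + 1) (by simp)]
    exact measurable_pi_lambda _ hX hdep.measurableSet_setOf
  have hdisj : Pairwise (Disjoint on fun r => {ω | P ω ∧ partialSum (X · ω) r + d ≤ c ∧
      c < partialSum (X · ω) r + d + X (r + 1) ω}) := by
    refine (pairwise_disjoint_on _).2 fun r r' hrr' => Set.disjoint_left.2 ?_
    rintro ω ⟨-, -, hr⟩ ⟨-, hr', -⟩
    have := partialSum_mono (X · ω) (Nat.succ_le_of_lt hrr')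
    rw [partialSum_succ] at this
    omega
  rw [← measure_iUnion hdisj fun r => hP.inter (hmeas r)]
  exact measure_mono (Set.iUnion_subset fun r _ hω => hω.1)

theorem measure_prefix_and_lastBlock_le (hX : ∀ i, Measurable (X i)) (hXpos : ∀ i ω, 0 < X i ω)
    (hindep : iIndepFun (Sum.elim X Y) μ)
    (hident : ∀ i j, IdentDistrib (Sum.elim X Y i) (Sum.elim X Y j) μ μ) {c : ℕ} {T : Ω → ℕ}
    (hT : ∀ ω, partialSum (X · ω) (T ω) ≤ c ∧ c < partialSum (X · ω) (T ω + 1))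
    {v₁ v₂ : List ℕ} {E : Set Ω} (hE : ∀ ω ∈ E, v₁.sum + v₂.sum ≤ partialSum (X · ω) (T ω)) :
    μ ({ω | MatchesAt (X · ω) 0 v₁ ∧ MatchesAt (X · ω) (T ω - v₂.length) v₂} ∩ E) ≤
      μ {ω | MatchesAt (X · ω) 0 v₁} * μ {ω | MatchesAt (Y · ω) 0 v₂} := by
  set D : ℕ → Set Ω := fun r => {ω | (MatchesAt (X · ω) 0 v₁ ∧
    partialSum (X · ω) r + v₂.sum ≤ c ∧ c < partialSum (X · ω) r + v₂.sum + X (r + v₂.length + 1) ω)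
    ∧ MatchesAt (X · ω) r v₂}
  set G : ℕ → Set Ω := fun r => {ω | MatchesAt (X · ω) 0 v₁ ∧
    partialSum (X · ω) r + v₂.sum ≤ c ∧ c < partialSum (X · ω) r + v₂.sum + X (r + 1) ω}
  have hsub : {ω | MatchesAt (X · ω) 0 v₁ ∧ MatchesAt (X · ω) (T ω - v₂.length) v₂} ∩ E ⊆
      ⋃ k, D (v₁.length + k) := by
    rintro ω ⟨⟨h₁, h₂⟩, hω⟩
    have hlen := length_add_length_le_of_matchesAt (hXpos · ω) h₁ h₂ (hE ω hω)
    have hsplit := partialSum_add_length h₂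
    rw [Nat.sub_add_cancel (by omega)] at hsplit
    obtain ⟨hc, hc'⟩ := hT ω
    rw [partialSum_succ, show T ω + 1 = T ω - v₂.length + v₂.length + 1 by omega] at hc'
    refine Set.mem_iUnion.2 ⟨T ω - v₂.length - v₁.length, ?_⟩
    rw [show v₁.length + (T ω - v₂.length - v₁.length) = T ω - v₂.length by omega]
    exact ⟨⟨h₁, by omega, by omega⟩, h₂⟩
  have hXindep : iIndepFun X μ := hindep.precomp (g := Sum.inl) Sum.inl_injective
  have hXident : ∀ i j, IdentDistrib (X i) (X j) μ μ := fun i j => hident (.inl i) (.inl j)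
  calc _ ≤ ∑' k, μ (D (v₁.length + k)) := (measure_mono hsub).trans (measure_iUnion_le _)
    _ = ∑' k, μ (G (v₁.length + k)) * μ {ω | MatchesAt (Y · ω) 0 v₂} := tsum_congr fun k => by
        rw [measure_crossing_and_matchesAt_eq hX hXindep hXident (Nat.le_add_right _ k),
          measure_matchesAt_eq hindep hident]
    _ = (∑' k, μ (G (v₁.length + k))) * μ {ω | MatchesAt (Y · ω) 0 v₂} := ENNReal.tsum_mul_right
    _ ≤ (∑' r, μ (G r)) * μ {ω | MatchesAt (Y · ω) 0 v₂} := by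
        gcongr ?_ * _
        exact ENNReal.tsum_comp_le_tsum_of_injective (add_right_injective v₁.length) _
    _ ≤ _ := by
        gcongr ?_ * _
        exact tsum_measure_and_crossing_le hX
          (measurable_pi_lambda _ hX (dependsOn_matchesAt 0 v₁).measurableSet_setOf) _ _

end Gaps

/-- Lemma 2.2 of the paper: there is an `M₀ > 0` such that for all `M ≥ M₀`,
any i.i.d. positive integer gap sequence `X` with an independent copy `Y`,
any `n`, any `b ≤ n/M`, and any set `K` of pairs of vectors `(v₁, v₂)` of
positive integers with `n/3 ≤ S(v₁) ≤ 4n/9`, `S(v₁') < n/3`,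
`n/3 ≤ S(v₂) ≤ 4n/9`, `S(v₂') < n/3`, the probability of the union over
`(v₁,v₂) ∈ K` of `{X_[1,l(v₁)] = v₁, X_[T_{n-b}-l(v₂)+1, T_{n-b}] = v₂}`
intersected with `Lₙ` is at most
`∑_{(v₁,v₂) ∈ K} P(X_[1,l(v₁)] = v₁) P(Y_[1,l(v₂)] = v₂)`. -/
theorem stmt8 :
    ∃ M₀ : ℝ, 0 < M₀ ∧ ∀ M : ℝ, M₀ ≤ M →
    ∀ (Ω : Type) [MeasurableSpace Ω] (μ : Measure Ω), IsProbabilityMeasure μ →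
    ∀ (X Y : ℕ → Ω → ℕ),
      (∀ i, Measurable (X i)) → (∀ i, Measurable (Y i)) →
      (∀ i ω, 0 < X i ω) → (∀ i ω, 0 < Y i ω) →
      iIndepFun (Sum.elim X Y) μ →
      (∀ s : ℕ ⊕ ℕ, IdentDistrib (Sum.elim X Y s) (X 1) μ μ) →
    ∀ (W : ℕ → Ω → ℕ), (∀ m ω, W m ω = ∑ i ∈ Finset.Icc 1 m, X i ω) →
    ∀ n : ℕ, 1 ≤ n →
    ∀ b : ℕ, (b : ℝ) ≤ (n : ℝ) / M →
    ∀ (T : Ω → ℕ),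
      (∀ ω, W (T ω) ω ≤ n - b ∧ ∀ i, W i ω ≤ n - b → i ≤ T ω) →
    ∀ K : Set (List ℕ × List ℕ),
      (∀ p ∈ K, (∀ x ∈ p.1, 0 < x) ∧ (∀ x ∈ p.2, 0 < x) ∧
        (n : ℝ) / 3 ≤ (p.1.sum : ℝ) ∧ (p.1.sum : ℝ) ≤ 4 * (n : ℝ) / 9 ∧
        (p.1.dropLast.sum : ℝ) < (n : ℝ) / 3 ∧
        (n : ℝ) / 3 ≤ (p.2.sum : ℝ) ∧ (p.2.sum : ℝ) ≤ 4 * (n : ℝ) / 9 ∧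
        (p.2.dropLast.sum : ℝ) < (n : ℝ) / 3) →
    μ ((⋃ p ∈ K, {ω | (∀ j : Fin p.1.length, X (j + 1) ω = p.1.get j) ∧
          (∀ j : Fin p.2.length, X (T ω - p.2.length + 1 + j) ω = p.2.get j)})
        ∩ {ω | ∀ i ∈ Finset.Icc 1 n, (X i ω : ℝ) ≤ (n : ℝ) / M})
      ≤ ∑' p : K, μ {ω | ∀ j : Fin (p : List ℕ × List ℕ).1.length,
            X (j + 1) ω = (p : List ℕ × List ℕ).1.get j}
          * μ {ω | ∀ j : Fin (p : List ℕ × List ℕ).2.length,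
            Y (j + 1) ω = (p : List ℕ × List ℕ).2.get j} := by
  refine ⟨18, by norm_num,
    fun M hM Ω _ μ _ X Y hX _ hXpos _ hindep hident W hW n _ b hb T hT K hK => ?_⟩
  have hnM : (n : ℝ) / M ≤ n / 18 := div_le_div_of_nonneg_left n.cast_nonneg (by norm_num) hM
  have hbn : b ≤ n := by
    have : (b : ℝ) ≤ n := by linarith [n.cast_nonneg (α := ℝ)]
    exact_mod_cast this
  have hW' : ∀ m ω, W m ω = partialSum (X · ω) m := hW
  have hT' : ∀ ω, partialSum (X · ω) (T ω) ≤ n - b ∧ n - b < partialSum (X · ω) (T ω + 1) := by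
    simp_rw [← hW']
    exact fun ω => ⟨(hT ω).1, lt_of_not_ge fun h => by have := (hT ω).2 _ h; omega⟩
  rw [Set.iUnion₂_inter]
  refine (measure_biUnion_le μ K.to_countable _).trans (ENNReal.tsum_le_tsum fun p => ?_)
  obtain ⟨-, -, -, hp₁, -, -, hp₂, -⟩ := hK p p.2
  have hsum : ∀ ω ∈ {ω | ∀ i ∈ Icc 1 n, (X i ω : ℝ) ≤ n / M},
      p.1.1.sum + p.1.2.sum ≤ partialSum (X · ω) (T ω) := fun ω hω => by
    have := sub_le_partialSum_of_lt_partialSum_succ (hXpos · ω) (by positivity) (Nat.sub_le n b)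
      hω (hT' ω).2
    push_cast [Nat.cast_sub hbn] at this
    exact_mod_cast (by rw [Nat.cast_add]; linarith :
      ((p.1.1.sum + p.1.2.sum : ℕ) : ℝ) ≤ partialSum (X · ω) (T ω))
  simpa only [MatchesAt, zero_add, add_comm 1] using measure_prefix_and_lastBlock_le hX hXpos hindep
    (fun i j => (hident i).trans (hident j).symm) hT' hsum
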